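/- arXiv:1410.4906 — 2 statements merged into one kernel-verified Lean document; each statement's English description precedes it below -/
import Mathlib

section
/- Let γ > 0, ω₀ real, and let ω vary with b(ω) = ω₀ − ω, a(ω) = √(b² + γ²). For fixed τ > 0, the partial derivatives of x_ω(τ) = cos(ωτ)cos(a τ) − (b/a) sin(ωτ) sin(aτ) and y_ω(τ) = −sin(ωτ)cos(aτ) − (b/a) cos(ωτ) sin(aτ) with respect to ω are ∂x/∂ω = −(γ²/a²) sin(ωτ)(τ cos(aτ) − (1/a) sin(aτ)) and ∂y/∂ω = −(γ²/a²) cos(ωτ)(τ cos(aτ) − (1/a) sin(aτ)). Consequently, wherever ∂x/∂ω ≠ 0, the slope (∂y/∂ω)/(∂x/∂ω) equals cot(ωτ). -/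
theorem stmt_13 (γ ω₀ : ℝ) (hγ : 0 < γ) (τ : ℝ) (hτ : 0 < τ) :
    let b : ℝ → ℝ := fun ω => ω₀ - ω
    let a : ℝ → ℝ := fun ω => Real.sqrt (b ω ^ 2 + γ ^ 2)
    let x : ℝ → ℝ := fun ω =>
      Real.cos (ω * τ) * Real.cos (a ω * τ) - (b ω / a ω) * Real.sin (ω * τ) * Real.sin (a ω * τ)
    let y : ℝ → ℝ := fun ω =>
      - Real.sin (ω * τ) * Real.cos (a ω * τ) - (b ω / a ω) * Real.cos (ω * τ) * Real.sin (a ω * τ)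
    let dx : ℝ → ℝ := fun ω =>
      -(γ ^ 2 / a ω ^ 2) * Real.sin (ω * τ) * (τ * Real.cos (a ω * τ) - (1 / a ω) * Real.sin (a ω * τ))
    let dy : ℝ → ℝ := fun ω =>
      -(γ ^ 2 / a ω ^ 2) * Real.cos (ω * τ) * (τ * Real.cos (a ω * τ) - (1 / a ω) * Real.sin (a ω * τ))
    (∀ ω : ℝ, HasDerivAt x (dx ω) ω ∧ HasDerivAt y (dy ω) ω)
    ∧ (∀ ω : ℝ, dx ω ≠ 0 → dy ω / dx ω = Real.cos (ω * τ) / Real.sin (ω * τ)) := by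
  intro b a x y dx dy
  have hsq : ∀ ω : ℝ, 0 < b ω ^ 2 + γ ^ 2 := fun ω => by positivity
  have hapos : ∀ ω : ℝ, 0 < a ω := fun ω => Real.sqrt_pos.mpr (hsq ω)
  have ha2 : ∀ ω : ℝ, a ω ^ 2 = b ω ^ 2 + γ ^ 2 := fun ω => Real.sq_sqrt (hsq ω).le
  have hb : ∀ ω : ℝ, HasDerivAt b (-1) ω := fun ω => (hasDerivAt_id ω).const_sub ω₀
  have ha : ∀ ω : ℝ, HasDerivAt a (-(b ω) / a ω) ω := by
    intro ω
    have hinner : HasDerivAt (fun ω => b ω ^ 2 + γ ^ 2)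
        (2 * b ω ^ 1 * (-1)) ω := ((hb ω).pow 2).add_const _
    have hsqrt := (Real.hasDerivAt_sqrt (hsq ω).ne').comp ω hinner
    convert hsqrt using 1
    have := (hapos ω).ne'
    show -(b ω) / a ω = 1 / (2 * Real.sqrt (b ω ^ 2 + γ ^ 2)) * (2 * b ω ^ 1 * (-1))
    have : Real.sqrt (b ω ^ 2 + γ ^ 2) = a ω := rfl
    rw [this]
    field_simp
    all_goals rfl
  constructor
  · intro ω
    have hane := (hapos ω).ne'
    have hγ2 : γ ^ 2 = a ω ^ 2 - b ω ^ 2 := by linarith [ha2 ω]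
    have hc1 : HasDerivAt (fun ω : ℝ => Real.cos (ω * τ))
        (-Real.sin (ω * τ) * (1 * τ)) ω := ((hasDerivAt_id ω).mul_const τ).cos
    have hs1 : HasDerivAt (fun ω : ℝ => Real.sin (ω * τ))
        (Real.cos (ω * τ) * (1 * τ)) ω := ((hasDerivAt_id ω).mul_const τ).sin
    have hc2 : HasDerivAt (fun ω : ℝ => Real.cos (a ω * τ))
        (-Real.sin (a ω * τ) * (-(b ω) / a ω * τ)) ω := ((ha ω).mul_const τ).cos
    have hs2 : HasDerivAt (fun ω : ℝ => Real.sin (a ω * τ))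
        (Real.cos (a ω * τ) * (-(b ω) / a ω * τ)) ω := ((ha ω).mul_const τ).sin
    have hq : HasDerivAt (fun ω => b ω / a ω)
        ((-1 * a ω - b ω * (-(b ω) / a ω)) / a ω ^ 2) ω := (hb ω).div (ha ω) hane
    constructor
    · have hX := (hc1.mul hc2).sub ((hq.mul hs1).mul hs2)
      convert hX using 1
      show dx ω = _
      simp only [dx, Pi.mul_apply, Pi.neg_apply]
      rw [hγ2]
      field_simp
      ring
      all_goals rfl
    · have hY := ((hs1.neg.mul hc2)).sub ((hq.mul hc1).mul hs2)
      convert hY using 1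
      show dy ω = _
      simp only [dy, Pi.mul_apply, Pi.neg_apply]
      rw [hγ2]
      field_simp
      ring
      all_goals rfl
  · intro ω hdx
    have hs : Real.sin (ω * τ) ≠ 0 := by
      intro h
      apply hdx
      show -(γ ^ 2 / a ω ^ 2) * Real.sin (ω * τ) * _ = 0
      rw [h]; ring
    rw [div_eq_div_iff hdx hs]
    show (-(γ ^ 2 / a ω ^ 2) * Real.cos (ω * τ) * _) * _ = _
    ring
end

section
/- Let γ > 0, ω₀ ≠ 0, and set ω_c = (ω₀² + γ²)/ω₀. The extremal trajectory with ω = ω_c satisfies x(τ) = (ω₀²/(ω₀²+γ²)) cos(((ω₀²+γ²)/ω₀)τ) + γ²/(ω₀²+γ²) and y(τ) = −(ω₀²/(ω₀²+γ²)) sin(((ω₀²+γ²)/ω₀)τ); hence (x(τ) − γ²/(ω₀²+γ²))² + y(τ)² = (ω₀²/(ω₀²+γ²))² for all τ, i.e. the critical trajectory is a circle of radius ω₀²/(ω₀²+γ²) centered at (γ²/(ω₀²+γ²), 0). -/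
theorem stmt_18 (γ ω₀ : ℝ) (hγ : 0 < γ) (hω : ω₀ ≠ 0) (τ : ℝ) :
    let ωc := (ω₀ ^ 2 + γ ^ 2) / ω₀
    let ω := ωc / 2
    let b := ω₀ - ω
    let a := Real.sqrt (b ^ 2 + γ ^ 2)
    let x := Real.cos (ω * τ) * Real.cos (a * τ) - (b / a) * Real.sin (ω * τ) * Real.sin (a * τ)
    let y := - Real.sin (ω * τ) * Real.cos (a * τ) - (b / a) * Real.cos (ω * τ) * Real.sin (a * τ)
    x = (ω₀ ^ 2 / (ω₀ ^ 2 + γ ^ 2)) * Real.cos (((ω₀ ^ 2 + γ ^ 2) / ω₀) * τ)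
        + γ ^ 2 / (ω₀ ^ 2 + γ ^ 2)
    ∧ y = -(ω₀ ^ 2 / (ω₀ ^ 2 + γ ^ 2)) * Real.sin (((ω₀ ^ 2 + γ ^ 2) / ω₀) * τ)
    ∧ (x - γ ^ 2 / (ω₀ ^ 2 + γ ^ 2)) ^ 2 + y ^ 2 = (ω₀ ^ 2 / (ω₀ ^ 2 + γ ^ 2)) ^ 2 := by
  intro ωc ω b a x y
  have hS : (0:ℝ) < ω₀ ^ 2 + γ ^ 2 := by positivity
  have hSne : ω₀ ^ 2 + γ ^ 2 ≠ 0 := ne_of_gt hS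
  have hω2 : ω = (ω₀ ^ 2 + γ ^ 2) / (2 * ω₀) := by
    show (ω₀ ^ 2 + γ ^ 2) / ω₀ / 2 = _
    ring
  have hbω : b = (ω₀ ^ 2 - γ ^ 2) / (2 * ω₀) := by
    show ω₀ - (ω₀ ^ 2 + γ ^ 2) / ω₀ / 2 = _
    field_simp
    ring
  have ha2 : b ^ 2 + γ ^ 2 = ((ω₀ ^ 2 + γ ^ 2) / (2 * ω₀)) ^ 2 := by
    rw [hbω]
    field_simp
    ring
  have ha : a = |(ω₀ ^ 2 + γ ^ 2) / (2 * ω₀)| := by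
    show Real.sqrt (b ^ 2 + γ ^ 2) = _
    rw [ha2, Real.sqrt_sq_eq_abs]
  have hωτ : ((ω₀ ^ 2 + γ ^ 2) / ω₀) * τ = 2 * (ω * τ) := by
    show (ω₀ ^ 2 + γ ^ 2) / ω₀ * τ = 2 * ((ω₀ ^ 2 + γ ^ 2) / ω₀ / 2 * τ)
    ring
  have hbdω : b / ω = (ω₀ ^ 2 - γ ^ 2) / (ω₀ ^ 2 + γ ^ 2) := by
    rw [hbω, hω2]
    rw [div_div_div_cancel_right₀]
    exact mul_ne_zero two_ne_zero hω
  -- unified facts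
  have key : Real.cos (a * τ) = Real.cos (ω * τ) ∧
      (b / a) * Real.sin (a * τ) =
        ((ω₀ ^ 2 - γ ^ 2) / (ω₀ ^ 2 + γ ^ 2)) * Real.sin (ω * τ) := by
    rcases lt_or_gt_of_ne hω with hneg | hpos
    · have haω : a = -ω := by
        rw [ha, hω2, abs_of_neg (by
          apply div_neg_of_pos_of_neg hS
          linarith)]
      constructor
      · rw [haω]; rw [show -ω * τ = -(ω * τ) by ring, Real.cos_neg]
      · rw [haω, show -ω * τ = -(ω * τ) by ring, Real.sin_neg, div_neg, ← hbdω]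
        ring
    · have haω : a = ω := by
        rw [ha, hω2, abs_of_pos (by positivity)]
      exact ⟨by rw [haω], by rw [haω, hbdω]⟩
  obtain ⟨hca, hsa⟩ := key
  have hpyth := Real.sin_sq_add_cos_sq (ω * τ)
  have hx : x = (ω₀ ^ 2 / (ω₀ ^ 2 + γ ^ 2)) * Real.cos (((ω₀ ^ 2 + γ ^ 2) / ω₀) * τ)
      + γ ^ 2 / (ω₀ ^ 2 + γ ^ 2) := by
    show Real.cos (ω * τ) * Real.cos (a * τ) - (b / a) * Real.sin (ω * τ) * Real.sin (a * τ) = _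
    rw [hωτ, Real.cos_two_mul, hca,
      show (b / a) * Real.sin (ω * τ) * Real.sin (a * τ)
        = Real.sin (ω * τ) * ((b / a) * Real.sin (a * τ)) by ring, hsa]
    field_simp
    nlinarith [hpyth]
  have hy : y = -(ω₀ ^ 2 / (ω₀ ^ 2 + γ ^ 2)) * Real.sin (((ω₀ ^ 2 + γ ^ 2) / ω₀) * τ) := by
    show - Real.sin (ω * τ) * Real.cos (a * τ) - (b / a) * Real.cos (ω * τ) * Real.sin (a * τ) = _
    rw [hωτ, Real.sin_two_mul, hca,
      show (b / a) * Real.cos (ω * τ) * Real.sin (a * τ)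
        = Real.cos (ω * τ) * ((b / a) * Real.sin (a * τ)) by ring, hsa]
    field_simp
    ring
  refine ⟨hx, hy, ?_⟩
  rw [hx, hy]
  have h2 := Real.sin_sq_add_cos_sq (((ω₀ ^ 2 + γ ^ 2) / ω₀) * τ)
  linear_combination (ω₀ ^ 2 / (ω₀ ^ 2 + γ ^ 2)) ^ 2 * h2
end
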